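/- Let G be a group and let ḡ ∈ G^n, ḡ' ∈ G^{n'} be tuples. If πḡ = 1, then the concatenations ḡ·ḡ' and ḡ'·ḡ are braid-equivalent. -/

import Mathlib

/-- One Hurwitz braid move: replace adjacent entries `a, b` by `a*b*a⁻¹, a`. -/
inductive BraidMove (G : Type*) [Group G] : List G → List G → Prop
  | mk (l₁ l₂ : List G) (a b : G) :
      BraidMove G (l₁ ++ a :: b :: l₂) (l₁ ++ (a * b * a⁻¹) :: a :: l₂)

/-- Braid equivalence of tuples: the equivalence relation generated by Hurwitz moves. -/
def BraidEquiv (G : Type*) [Group G] : List G → List G → Prop :=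
  Relation.EqvGen (BraidMove G)

/-- Componentwise conjugation of a tuple: `ḡ^h = (h g₁ h⁻¹, …, h gₙ h⁻¹)`. -/
def conjList {G : Type*} [Group G] (h : G) (l : List G) : List G :=
  l.map fun x => h * x * h⁻¹

/-!
Moving a single entry `x` leftwards across a tuple `l` by Hurwitz moves turns it into its
conjugate `(πl) x (πl)⁻¹`. Moving a whole tuple `m` across `l` this way, entry by entry,
shows `l · m ~ m^{πl} · l`; when `πl = 1` the conjugation is trivial.
-/

section

variable {G : Type*} [Group G]

theorem BraidMove.append_append {l l' : List G} (c d : List G) (h : BraidMove G l l') :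
    BraidMove G (c ++ l ++ d) (c ++ l' ++ d) := by
  obtain ⟨l₁, l₂, a, b⟩ := h
  simpa only [List.append_assoc, List.cons_append] using BraidMove.mk (c ++ l₁) (l₂ ++ d) a b

namespace BraidEquiv

theorem refl (l : List G) : BraidEquiv G l l :=
  Relation.EqvGen.refl l

theorem trans {l₁ l₂ l₃ : List G} (h₁₂ : BraidEquiv G l₁ l₂) (h₂₃ : BraidEquiv G l₂ l₃) :
    BraidEquiv G l₁ l₃ :=
  Relation.EqvGen.trans _ _ _ h₁₂ h₂₃

theorem append_append {l l' : List G} (c d : List G) (h : BraidEquiv G l l') :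
    BraidEquiv G (c ++ l ++ d) (c ++ l' ++ d) := by
  induction h with
  | rel _ _ hmove => exact Relation.EqvGen.rel _ _ (hmove.append_append c d)
  | refl l => exact refl _
  | symm _ _ _ ih => exact Relation.EqvGen.symm _ _ ih
  | trans _ _ _ _ _ ih₁₂ ih₂₃ => exact ih₁₂.trans ih₂₃

theorem cons {l l' : List G} (x : G) (h : BraidEquiv G l l') :
    BraidEquiv G (x :: l) (x :: l') := by
  simpa using h.append_append [x] []

theorem append_right {l l' : List G} (d : List G) (h : BraidEquiv G l l') :
    BraidEquiv G (l ++ d) (l' ++ d) := by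
  simpa using h.append_append [] d

end BraidEquiv

theorem braidEquiv_append_singleton (l : List G) (x : G) :
    BraidEquiv G (l ++ [x]) ((l.prod * x * l.prod⁻¹) :: l) := by
  induction l with
  | nil => simpa using BraidEquiv.refl [x]
  | cons a l ih =>
    have hmove : BraidEquiv G (a :: (l.prod * x * l.prod⁻¹) :: l)
        ((a * (l.prod * x * l.prod⁻¹) * a⁻¹) :: a :: l) :=
      Relation.EqvGen.rel _ _ (BraidMove.mk [] l a _)
    have hconj : a * (l.prod * x * l.prod⁻¹) * a⁻¹ = (a :: l).prod * x * (a :: l).prod⁻¹ := by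
      simp only [List.prod_cons, mul_inv_rev, mul_assoc]
    exact (ih.cons a).trans (hconj ▸ hmove)

theorem braidEquiv_append_conjList (l m : List G) :
    BraidEquiv G (l ++ m) (conjList l.prod m ++ l) := by
  induction m with
  | nil => simpa [conjList] using BraidEquiv.refl l
  | cons x m ih =>
    have hx : BraidEquiv G (l ++ x :: m) ((l.prod * x * l.prod⁻¹) :: (l ++ m)) := by
      simpa using (braidEquiv_append_singleton l x).append_right m
    simpa [conjList] using hx.trans (ih.cons _)

theorem conjList_one (l : List G) : conjList 1 l = l := by
  simp [conjList]

end

/-- if  then  and  are braid-equivalent. -/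
theorem braidEquiv_append_comm {G : Type*} [Group G] (g g' : List G) (hg : g.prod = 1) :
    BraidEquiv G (g ++ g') (g' ++ g) := by
  have h := braidEquiv_append_conjList g g'
  rwa [hg, conjList_one] at h
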